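/- Let n and r be positive integers. If n ≥ 2r−1, then there exists a real number μ with E_{2r,1}^μ(n) ≠ 0, and there exists a real number μ with D_{2r−1,1}^μ(n) ≠ 0. If n ≥ 2r+1, then there exists a real number μ with E_{−1,2r}^μ(n) ≠ 0, and there exists a real number μ with D_{−1,2r+1}^μ(n) ≠ 0. (That is, each of these determinants, regarded as a polynomial in μ, is not identically zero.) -/

import Mathlib

open Finset

/-- The determinant `E_{s,t}^μ(n)` with entries `C(μ+i+j+s+t-4, j+t-1) - δ_{i+s,j+t}`
(1-based indices `i,j`), where `C` is the generalized binomial coefficient. -/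
noncomputable def detE (μ : ℝ) (s : ℤ) (t : ℕ) (n : ℕ) : ℝ :=
  Matrix.det (Matrix.of fun i j : Fin n =>
    Ring.choose (μ + (i.1 + 1 : ℕ) + (j.1 + 1 : ℕ) + s + t - 4) (j.1 + t) -
      if (i.1 + 1 : ℤ) + s = (j.1 + 1 : ℤ) + t then 1 else 0)

/-- The determinant `D_{s,t}^μ(n)` with entries `C(μ+i+j+s+t-4, j+t-1) + δ_{i+s,j+t}`. -/
noncomputable def detD (μ : ℝ) (s : ℤ) (t : ℕ) (n : ℕ) : ℝ :=
  Matrix.det (Matrix.of fun i j : Fin n =>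
    Ring.choose (μ + (i.1 + 1 : ℕ) + (j.1 + 1 : ℕ) + s + t - 4) (j.1 + t) +
      if (i.1 + 1 : ℤ) + s = (j.1 + 1 : ℤ) + t then 1 else 0)

/-- The rising factorial (Pochhammer symbol) `(a)_b = a(a+1)⋯(a+b-1)`. -/
noncomputable def poch (a : ℝ) (b : ℕ) : ℝ := (ascPochhammer ℝ b).eval a

/-!
At `μ = 2 - s` every binomial entry has a natural-number argument: with `0`-based indices it is
`C(i + j + t, j + t)`. Matrices `(C(a i + b j, b j))` with `a`, `b` strictly increasing have all
minors positive (taking row differences turns the matrix into a sum of smaller ones of the same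
kind, a Lindström–Gessel–Viennot argument in disguise). The `δ`-term is supported on one diagonal
`i + (s - t) = j`. Adding its entries one at a time, each changes the determinant by the entry
times `(-1)^(s - t)` times a minor of the same shape (positive minors plus a perturbation further up
the diagonal), which is positive by induction. When `s - t` is odd for `E` (entries `-1`) and even
for `D` (entries `+1`), all these changes are positive.
-/

open Matrix

theorem Nat.choose_mul_add_choose (a b β : ℕ) (h : β ≤ b) :
    b.choose β * (a + b).choose b = (a + β).choose β * (a + b).choose (b - β) := by
  have := Nat.choose_mul (n := a + b) (k := b) (s := b - β) (Nat.sub_le b β)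
  rwa [Nat.choose_symm h, show a + b - (b - β) = a + β by omega,
    show b - (b - β) = β by omega, mul_comm, mul_comm ((a + b).choose _)] at this

theorem Nat.cast_choose_sub_cast_choose_eq_sum_Ico (a a' k : ℕ) (h : a ≤ a') :
    ((a' + (k + 1)).choose (k + 1) : ℝ) - (a + (k + 1)).choose (k + 1) =
      ∑ l ∈ Ico a a', ((l + 1 + k).choose k : ℝ) := by
  rw [← Finset.sum_Ico_sub (fun l => ((l + (k + 1)).choose (k + 1) : ℝ)) h]
  refine sum_congr rfl fun l _ => ?_
  rw [show l + 1 + (k + 1) = (l + (k + 1)) + 1 by ring, Nat.choose_succ_succ', Nat.cast_add,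
    add_sub_cancel_right, show l + (k + 1) = l + 1 + k by ring]

theorem Matrix.det_of_rows_sum {n ι R : Type*} [Fintype n] [DecidableEq n] [CommRing R]
    (A : n → Finset ι) (g : n → ι → n → R) :
    det (of fun i => ∑ l ∈ A i, g i l) = ∑ ρ ∈ Fintype.piFinset A, det (of fun i => g i (ρ i)) :=
  (detRowAlternating : (n → R) [⋀^n]→ₗ[R] R).toMultilinearMap.map_sum_finset g A

theorem Matrix.det_add_smul_single {R : Type*} [CommRing R] {m : ℕ}
    (A : Matrix (Fin (m + 1)) (Fin (m + 1)) R) (i j : Fin (m + 1)) (w : R) :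
    det (A + w • single i j 1) =
      det A + w * ((-1) ^ (i + j : ℕ) * det (A.submatrix i.succAbove j.succAbove)) := by
  have hrow : A + w • single i j 1 = A.updateRow i (A i + w • Pi.single j 1) := by
    ext k l
    by_cases hk : k = i
    · subst hk; simp [single_apply, Pi.single_apply, eq_comm]
    · simp [hk, Ne.symm hk]
  rw [hrow, det_updateRow_add, updateRow_eq_self, det_updateRow_smul, ← adjugate_apply,
    adjugate_fin_succ_eq_det_submatrix]

def Matrix.IsStrictlyTotallyPositive {m : ℕ} (M : Matrix (Fin m) (Fin m) ℝ) : Prop :=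
  ∀ (l : ℕ) (f g : Fin l → Fin m), StrictMono f → StrictMono g → 0 < (M.submatrix f g).det

namespace Matrix.IsStrictlyTotallyPositive

variable {m : ℕ} {M : Matrix (Fin m) (Fin m) ℝ}

theorem det_pos (hM : M.IsStrictlyTotallyPositive) : 0 < M.det := by
  simpa using hM m id id strictMono_id strictMono_id

theorem submatrix (hM : M.IsStrictlyTotallyPositive) {l : ℕ} {f g : Fin l → Fin m}
    (hf : StrictMono f) (hg : StrictMono g) : (M.submatrix f g).IsStrictlyTotallyPositive :=
  fun _ _ _ hf' hg' => hM _ _ _ (hf.comp hf') (hg.comp hg')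

theorem det_add_sum_smul_single_pos : ∀ {k m : ℕ} {M : Matrix (Fin m) (Fin m) ℝ},
    M.IsStrictlyTotallyPositive → ∀ (r c : Fin k → Fin m), StrictMono r → StrictMono c →
    ∀ w : Fin k → ℝ, (∀ p, 0 ≤ w p * (-1) ^ ((r p : ℕ) + c p)) →
    0 < (M + ∑ p, w p • single (r p) (c p) 1).det
  | 0, _, _, hM, _, _, _, _, _, _ => by simpa using hM.det_pos
  | _ + 1, 0, _, _, r, _, _, _, _, _ => (r 0).elim0
  | k + 1, m + 1, M, hM, r, c, hr, hc, w, hw => by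
    set i₀ := r (Fin.last k)
    set j₀ := c (Fin.last k)
    set M' := M + ∑ p : Fin k, w p.castSucc • single (r p.castSucc) (c p.castSucc) 1
    have hr' : ∀ p : Fin k, r p.castSucc < i₀ := fun p => hr (Fin.castSucc_lt_last p)
    have hc' : ∀ p : Fin k, c p.castSucc < j₀ := fun p => hc (Fin.castSucc_lt_last p)
    -- the earlier perturbations lie strictly above and left of `(i₀, j₀)`, so deleting row `i₀`
    -- and column `j₀` leaves them in place
    have hminor : M'.submatrix i₀.succAbove j₀.succAbove =
        M.submatrix i₀.succAbove j₀.succAbove + ∑ p : Fin k, w p.castSucc •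
          single ((r p.castSucc).castPred (Fin.ne_last_of_lt (hr' p)))
            ((c p.castSucc).castPred (Fin.ne_last_of_lt (hc' p))) 1 := by
      ext i j
      simp only [M', submatrix_apply, Matrix.add_apply, Matrix.sum_apply, Matrix.smul_apply,
        single_apply]
      congr 1
      refine sum_congr rfl fun p _ => congrArg _ (if_congr ?_ rfl rfl)
      rw [← Fin.succAbove_right_inj (p := i₀), ← Fin.succAbove_right_inj (p := j₀),
        Fin.succAbove_castPred_of_lt _ _ (hr' p), Fin.succAbove_castPred_of_lt _ _ (hc' p)]
    have hM'pos : 0 < M'.det :=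
      det_add_sum_smul_single_pos hM _ _ (hr.comp Fin.strictMono_castSucc)
        (hc.comp Fin.strictMono_castSucc) _ fun p => hw p.castSucc
    have hminor_pos : 0 < (M'.submatrix i₀.succAbove j₀.succAbove).det := by
      rw [hminor]
      refine det_add_sum_smul_single_pos
        (hM.submatrix (Fin.strictMono_succAbove i₀) (Fin.strictMono_succAbove j₀)) _ _
        (fun _ _ h => Fin.castPred_lt_castPred_iff.2 (hr (Fin.castSucc_lt_castSucc_iff.2 h)))
        (fun _ _ h => Fin.castPred_lt_castPred_iff.2 (hc (Fin.castSucc_lt_castSucc_iff.2 h)))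
        _ fun p => ?_
      simpa using hw p.castSucc
    rw [Fin.sum_univ_castSucc, ← add_assoc, det_add_smul_single, ← mul_assoc]
    exact add_pos_of_pos_of_nonneg hM'pos (mul_nonneg (hw _) hminor_pos.le)

end Matrix.IsStrictlyTotallyPositive

def binomialMatrix {m : ℕ} (a b : Fin m → ℕ) : Matrix (Fin m) (Fin m) ℝ :=
  of fun i j => ((a i + b j).choose (b j) : ℝ)

theorem det_binomialMatrix_pos_of_apply_zero {q : ℕ}
    (ih : ∀ a b : Fin q → ℕ, StrictMono a → StrictMono b → 0 < (binomialMatrix a b).det)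
    {a b : Fin (q + 1) → ℕ} (ha : StrictMono a) (hb : StrictMono b) (hb0 : b 0 = 0) :
    0 < (binomialMatrix a b).det := by
  set B := binomialMatrix a b
  set V : Matrix (Fin (q + 1)) (Fin (q + 1)) ℝ :=
    of fun i => Fin.cases (B 0) (fun i' => B i'.succ - B i'.castSucc) i
  have hBV : B.det = V.det :=
    det_eq_of_forall_row_eq_smul_add_pred (fun _ => 1) (fun _ => rfl) fun i j => by simp [V]
  -- since `b 0 = 0`, the first column of `V` is `(1, 0, …, 0)`
  have hV : V.det = (V.submatrix Fin.succ Fin.succ).det := by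
    rw [det_succ_column_zero, Fin.sum_univ_succ, Finset.sum_eq_zero fun i _ => by
      simp [V, B, binomialMatrix, hb0]]
    simp [V, B, binomialMatrix, hb0]
  have hpos : ∀ j : Fin q, 0 < b j.succ := fun j => hb0 ▸ hb (Fin.succ_pos j)
  have hrows : V.submatrix Fin.succ Fin.succ = of fun i => ∑ l ∈ Ico (a i.castSucc) (a i.succ),
      fun j => ((l + 1 + (b j.succ - 1)).choose (b j.succ - 1) : ℝ) := by
    ext i j
    obtain ⟨k, hk⟩ := Nat.exists_eq_add_one_of_ne_zero (hpos j).ne'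
    simp only [V, B, binomialMatrix, submatrix_apply, of_apply, Fin.cases_succ, Pi.sub_apply,
      Finset.sum_apply, hk, Nat.add_sub_cancel]
    exact Nat.cast_choose_sub_cast_choose_eq_sum_Ico _ _ k (ha (Fin.castSucc_lt_succ (i := i))).le
  rw [hBV, hV, hrows, det_of_rows_sum]
  refine sum_pos (fun ρ hρ => ih (fun i => ρ i + 1) (fun j => b j.succ - 1) ?_ ?_) ?_
  · intro i i' hii'
    have h₁ := Finset.mem_Ico.1 (Fintype.mem_piFinset.1 hρ i)
    have h₂ := Finset.mem_Ico.1 (Fintype.mem_piFinset.1 hρ i')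
    have h₃ := ha.monotone (Fin.succ_le_castSucc_iff.2 hii')
    simp only
    omega
  · intro j j' hjj'
    have := hb (Fin.succ_lt_succ_iff.2 hjj')
    have := hpos j
    simp only
    omega
  · exact Fintype.piFinset_nonempty.2 fun i => nonempty_Ico.2 (ha (Fin.castSucc_lt_succ (i := i)))

theorem det_binomialMatrix_pos : ∀ {m : ℕ} (a b : Fin m → ℕ), StrictMono a → StrictMono b →
    0 < (binomialMatrix a b).det
  | 0, _, _, _, _ => by simp
  | q + 1, a, b, ha, hb => by
    set β := b 0
    have hβ : ∀ j, β ≤ b j := fun j => hb.monotone (Fin.zero_le j)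
    -- rescaling rows and columns by positive binomials moves `b 0` to `0`
    have hscale : (∏ j, ((b j).choose β : ℝ)) * (binomialMatrix a b).det =
        (∏ i, ((a i + β).choose β : ℝ)) * (binomialMatrix (a · + β) (b · - β)).det := by
      rw [← det_mul_row, ← det_mul_column]
      congr 1
      ext i j
      simp only [binomialMatrix, of_apply, add_assoc, Nat.add_sub_cancel' (hβ j)]
      exact_mod_cast Nat.choose_mul_add_choose (a i) (b j) β (hβ j)
    have hshift : 0 < (binomialMatrix (a · + β) (b · - β)).det :=
      det_binomialMatrix_pos_of_apply_zero (fun a' b' => det_binomialMatrix_pos a' b')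
        (fun _ _ h => Nat.add_lt_add_right (ha h) β)
        (fun j _ h => by have := hb h; have := hβ j; omega) (Nat.sub_self β)
    have hprod {ι : Type} [Fintype ι] (f : ι → ℕ) (hf : ∀ i, β ≤ f i) :
        0 < ∏ i, ((f i).choose β : ℝ) :=
      prod_pos fun i _ => by exact_mod_cast Nat.choose_pos (hf i)
    exact pos_of_mul_pos_right (hscale ▸ mul_pos (hprod _ fun _ => Nat.le_add_left _ _) hshift)
      (hprod b hβ).le

theorem binomialMatrix_isStrictlyTotallyPositive {m : ℕ} {a b : Fin m → ℕ} (ha : StrictMono a)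
    (hb : StrictMono b) : (binomialMatrix a b).IsStrictlyTotallyPositive :=
  fun _ _ _ hf hg => det_binomialMatrix_pos _ _ (ha.comp hf) (hb.comp hg)

theorem of_ite_add_eq_sum_smul_single (n : ℕ) (d : ℤ) (ε : ℝ) :
    (of fun i j : Fin n => if (i : ℤ) + d = j then ε else 0) =
      ∑ p : Fin (n - d.natAbs),
        ε • single (⟨p + (-d).toNat, by omega⟩ : Fin n) ⟨p + d.toNat, by omega⟩ 1 := by
  ext i j
  simp only [of_apply, Matrix.sum_apply, Matrix.smul_apply, single_apply, Fin.ext_iff,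
    smul_eq_mul, mul_ite, mul_one, mul_zero]
  by_cases h : (i : ℤ) + d = j
  · have hp₀ : min (i : ℕ) j < n - d.natAbs := by omega
    rw [if_pos h, Fintype.sum_eq_single ⟨min (i : ℕ) j, hp₀⟩ fun p hp => if_neg fun h' =>
      hp (Fin.ext (by simp only; omega)), if_pos (by simp only; omega)]
  · rw [if_neg h]
    exact (sum_eq_zero fun p _ => if_neg (by omega)).symm

theorem det_binomialMatrix_add_ite_pos {n : ℕ} {a b : Fin n → ℕ} (ha : StrictMono a)
    (hb : StrictMono b) (d : ℤ) {ε : ℝ} (hε : 0 ≤ ε * (-1) ^ d.natAbs) :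
    0 < (binomialMatrix a b + of fun i j : Fin n => if (i : ℤ) + d = j then ε else 0).det := by
  rw [of_ite_add_eq_sum_smul_single]
  refine (binomialMatrix_isStrictlyTotallyPositive ha hb).det_add_sum_smul_single_pos _ _
    (fun _ _ h => Fin.mk_lt_mk.2 (Nat.add_lt_add_right h _))
    (fun _ _ h => Fin.mk_lt_mk.2 (Nat.add_lt_add_right h _)) _ fun p => ?_
  rwa [show p + (-d).toNat + (p + d.toNat) = 2 * p + d.natAbs by omega, pow_add,
      pow_mul, neg_one_sq, one_pow, one_mul]

theorem ring_choose_two_sub_eq_choose (s : ℤ) (t i j : ℕ) :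
    Ring.choose ((2 - s : ℝ) + (i + 1 : ℕ) + (j + 1 : ℕ) + s + t - 4) (j + t) =
      ((i + (j + t)).choose (j + t) : ℝ) := by
  rw [← Ring.choose_natCast]
  push_cast
  ring_nf

theorem detE_two_sub (s : ℤ) (t n : ℕ) :
    detE (2 - s) s t n = (binomialMatrix (fun i : Fin n => (i : ℕ)) (fun j => j + t) +
      of fun i j : Fin n => if (i : ℤ) + (s - t) = j then -1 else 0).det := by
  unfold detE
  congr 1
  ext i j
  simp only [of_apply, Matrix.add_apply, binomialMatrix, ring_choose_two_sub_eq_choose]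
  rw [sub_eq_add_neg, neg_ite, neg_zero]
  congr 2
  apply propext
  omega

theorem detD_two_sub (s : ℤ) (t n : ℕ) :
    detD (2 - s) s t n = (binomialMatrix (fun i : Fin n => (i : ℕ)) (fun j => j + t) +
      of fun i j : Fin n => if (i : ℤ) + (s - t) = j then 1 else 0).det := by
  unfold detD
  congr 1
  ext i j
  simp only [of_apply, Matrix.add_apply, binomialMatrix, ring_choose_two_sub_eq_choose]
  congr 2
  apply propext
  omega

theorem detE_two_sub_pos {s : ℤ} {t : ℕ} (n : ℕ) (h : Odd (s - t)) : 0 < detE (2 - s) s t n := by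
  rw [detE_two_sub]
  refine det_binomialMatrix_add_ite_pos (fun _ _ h => h) (fun _ _ h => Nat.add_lt_add_right h t)
    _ ?_
  rw [(Int.natAbs_odd.2 h).neg_one_pow]
  norm_num

theorem detD_two_sub_pos {s : ℤ} {t : ℕ} (n : ℕ) (h : Even (s - t)) : 0 < detD (2 - s) s t n := by
  rw [detD_two_sub]
  refine det_binomialMatrix_add_ite_pos (fun _ _ h => h) (fun _ _ h => Nat.add_lt_add_right h t)
    _ ?_
  rw [(Int.natAbs_even.2 h).neg_one_pow]
  norm_num

theorem determinants_nonzero_general (n r : ℕ) :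
    (2 * r - 1 ≤ n →
      (∃ μ : ℝ, detE μ (2 * r) 1 n ≠ 0) ∧ (∃ μ : ℝ, detD μ (2 * r - 1) 1 n ≠ 0)) ∧
    (2 * r + 1 ≤ n →
      (∃ μ : ℝ, detE μ (-1) (2 * r) n ≠ 0) ∧ (∃ μ : ℝ, detD μ (-1) (2 * r + 1) n ≠ 0)) := by
  refine ⟨fun _ => ⟨⟨_, (detE_two_sub_pos n ?_).ne'⟩, ⟨_, (detD_two_sub_pos n ?_).ne'⟩⟩,
    fun _ => ⟨⟨_, (detE_two_sub_pos n ?_).ne'⟩, ⟨_, (detD_two_sub_pos n ?_).ne'⟩⟩⟩ <;>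
  simp only [Int.odd_iff, Int.even_iff] <;> omega

/-- Non-vanishing (as polynomials in `μ`) of the determinants `E_{2r,1}`, `D_{2r-1,1}`,
`E_{-1,2r}`, and `D_{-1,2r+1}`. -/
theorem determinants_nonzero (n r : ℕ) (hn : 1 ≤ n) (hr : 1 ≤ r) :
    (2 * r - 1 ≤ n →
      (∃ μ : ℝ, detE μ (2 * r) 1 n ≠ 0) ∧ (∃ μ : ℝ, detD μ (2 * r - 1) 1 n ≠ 0)) ∧
    (2 * r + 1 ≤ n →
      (∃ μ : ℝ, detE μ (-1) (2 * r) n ≠ 0) ∧ (∃ μ : ℝ, detD μ (-1) (2 * r + 1) n ≠ 0)) :=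
  determinants_nonzero_general n r
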